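/- For closed convex cones K₁, K₂ ⊆ ℝ², the dual cone of their intersection equals the sum of their dual cones: (K₁ ∩ K₂)* = K₁* + K₂*. -/

import Mathlib

open Pointwise

/-- The dual cone of a set `S`. -/
def dualCone (S : Set (EuclideanSpace ℝ (Fin 2))) : Set (EuclideanSpace ℝ (Fin 2)) :=
  {y | ∀ x ∈ S, 0 ≤ (inner ℝ x y : ℝ)}

/-!
By the bipolar theorem `K** = K` for closed convex cones, `(K₁* + K₂*)* = K₁ ∩ K₂`, so the identity
holds as soon as `K₁* + K₂*` is closed. The sum `C + D` of two closed convex cones in `ℝ²` is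
closed: if `C ∩ -D = {0}`, compactness of the unit sphere gives `m ‖c‖ ≤ ‖c + d‖`, so sums of
bounded size come from a compact part of `C × D`; otherwise `C + D` contains a line `ℝ v`, hence
is the preimage of a convex cone in `ℝ² / ℝ v ≅ ℝ`, and every convex cone in `ℝ` is closed.
-/

open Set Metric Module ProperCone

theorem Submodule.exists_ker_eq_of_finrank_add_one_eq {K V : Type*} [Field K] [AddCommGroup V]
    [Module K V] [FiniteDimensional K V] (p : Submodule K V) (hp : finrank K p + 1 = finrank K V) :
    ∃ f : V →ₗ[K] K, LinearMap.ker f = p := by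
  have hlt : p < ⊤ := by
    refine lt_top_iff_ne_top.2 fun htop => ?_
    rw [htop, finrank_top] at hp
    omega
  obtain ⟨f, hf0, hpf⟩ := p.exists_le_ker_of_lt_top hlt
  have hker : finrank K (LinearMap.ker f) < finrank K V :=
    Submodule.finrank_lt (mt LinearMap.ker_eq_top.1 hf0)
  exact ⟨f, (Submodule.eq_of_le_of_finrank_le hpf (by omega)).symm⟩

namespace PointedCone

theorem isClosed_coe_real (C : PointedCone ℝ ℝ) : IsClosed (C : Set ℝ) := by
  refine isClosed_of_closure_subset fun t ht => ?_
  rcases eq_or_ne t 0 with rfl | ht0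
  · exact C.zero_mem
  obtain ⟨a, haC, hta⟩ := Metric.mem_closure_iff.1 ht |t| (abs_pos.2 ht0)
  rw [Real.dist_eq] at hta
  have hsign : 0 < t * a := by nlinarith [sq_lt_sq.2 hta, sq_nonneg a]
  have ha0 : a ≠ 0 := by rintro rfl; simp at hsign
  simpa [div_mul_cancel₀ t ha0] using
    C.smul_mem (div_pos_iff.2 (pos_and_pos_or_neg_and_neg_of_mul_pos hsign)).le haC

theorem isClosed_of_ker_subset {V : Type*} [AddCommGroup V] [Module ℝ V] [TopologicalSpace V]
    (E : PointedCone ℝ V) (f : V →ₗ[ℝ] ℝ) (hf : Continuous f)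
    (hker : (LinearMap.ker f : Set V) ⊆ E) : IsClosed (E : Set V) := by
  have hE : (E : Set V) = f ⁻¹' (E.map f) := by
    refine (subset_preimage_image f E).antisymm ?_
    rintro x ⟨e, he, hfx⟩
    have hxe : x - e ∈ LinearMap.ker f := by simp [hfx]
    simpa using E.add_mem he (hker hxe)
  rw [hE]
  exact (isClosed_coe_real _).preimage hf

variable {V : Type*} [NormedAddCommGroup V] [NormedSpace ℝ V] [FiniteDimensional ℝ V]

theorem isClosed_of_neg_mem_of_finrank_eq_two (hV : finrank ℝ V = 2) (E : PointedCone ℝ V)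
    {v : V} (hv : v ≠ 0) (hvE : v ∈ E) (hnvE : -v ∈ E) : IsClosed (E : Set V) := by
  obtain ⟨f, hf⟩ := (ℝ ∙ v).exists_ker_eq_of_finrank_add_one_eq
    (by rw [finrank_span_singleton hv, hV])
  refine E.isClosed_of_ker_subset f (LinearMap.continuous_of_finiteDimensional f) fun x hx => ?_
  rw [SetLike.mem_coe, hf, Submodule.mem_span_singleton] at hx
  obtain ⟨t, rfl⟩ := hx
  rcases le_total 0 t with ht | ht
  · exact E.smul_mem ht hvE
  · simpa using E.smul_mem (neg_nonneg.2 ht) hnvE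

variable {C D : PointedCone ℝ V}

theorem exists_pos_mul_norm_le_norm_add (hC : IsClosed (C : Set V)) (hD : IsClosed (D : Set V))
    (hCD : C ⊓ -D = ⊥) : ∃ m > 0, ∀ c ∈ C, ∀ d ∈ D, m * ‖c‖ ≤ ‖c + d‖ := by
  have hS : IsCompact ((C : Set V) ∩ sphere 0 1) := (isCompact_sphere 0 1).inter_left hC
  have hpos : ∀ c ∈ (C : Set V) ∩ sphere 0 1, 0 < infDist c (-(D : Set V)) := by
    rintro c ⟨hc, hc1⟩
    refine (hD.neg.notMem_iff_infDist_pos ⟨0, by simp⟩).1 fun hcD => ?_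
    have hc0 : c ∈ C ⊓ -D := ⟨hc, hcD⟩
    rw [hCD, Submodule.mem_bot] at hc0
    simp [hc0] at hc1
  obtain ⟨m, hm, hmS⟩ := hS.exists_forall_le' (continuous_infDist_pt _).continuousOn hpos
  refine ⟨m, hm, fun c hc d hd => ?_⟩
  rcases eq_or_ne c 0 with rfl | hc0
  · simp
  have hn : 0 < ‖c‖ := norm_pos_iff.2 hc0
  have hcS : ‖c‖⁻¹ • c ∈ (C : Set V) ∩ sphere 0 1 :=
    ⟨C.smul_mem (inv_nonneg.2 hn.le) hc, by simp [norm_smul, hn.ne']⟩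
  have hdD : -(‖c‖⁻¹ • d) ∈ -(D : Set V) := by
    simpa using D.smul_mem (inv_nonneg.2 hn.le) hd
  calc m * ‖c‖ ≤ infDist (‖c‖⁻¹ • c) (-(D : Set V)) * ‖c‖ := by gcongr; exact hmS _ hcS
    _ ≤ dist (‖c‖⁻¹ • c) (-(‖c‖⁻¹ • d)) * ‖c‖ := by gcongr; exact infDist_le_dist_of_mem hdD
    _ = ‖c + d‖ := by
      rw [dist_eq_norm, sub_neg_eq_add, ← smul_add, norm_smul, norm_inv, norm_norm,
        mul_right_comm, inv_mul_cancel₀ hn.ne', one_mul]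

theorem isClosed_sup_of_inf_neg_eq_bot (hC : IsClosed (C : Set V)) (hD : IsClosed (D : Set V))
    (hCD : C ⊓ -D = ⊥) : IsClosed ((C ⊔ D : PointedCone ℝ V) : Set V) := by
  obtain ⟨m, hm, hmCD⟩ := exists_pos_mul_norm_le_norm_add hC hD hCD
  rw [Submodule.coe_sup]
  refine isClosed_of_closure_subset fun z hz => ?_
  set r := ‖z‖ + 1
  set K := ((C : Set V) ∩ closedBall 0 (r / m)) + ((D : Set V) ∩ closedBall 0 (r / m + r))
  have hK : IsCompact K :=
    ((isCompact_closedBall _ _).inter_left hC).add ((isCompact_closedBall _ _).inter_left hD)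
  have hKCD : K ⊆ C + D := add_subset_add inter_subset_left inter_subset_left
  suffices z ∈ closure K from hKCD (hK.isClosed.closure_subset this)
  rw [Metric.mem_closure_iff] at hz ⊢
  intro ε hε
  obtain ⟨_, ⟨c, hc, d, hd, rfl⟩, hzcd⟩ := hz (min ε 1) (by positivity)
  have hcd : ‖c + d‖ ≤ r := by
    have h := norm_sub_norm_le (c + d) z
    rw [← dist_eq_norm, dist_comm] at h
    linarith [min_le_right ε 1]
  have hc' : ‖c‖ ≤ r / m := by rw [le_div_iff₀ hm]; linarith [hmCD c hc d hd]
  have hd' : ‖d‖ ≤ r / m + r :=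
    calc ‖d‖ = ‖(c + d) - c‖ := by rw [add_sub_cancel_left]
      _ ≤ ‖c + d‖ + ‖c‖ := norm_sub_le _ _
      _ ≤ r / m + r := by linarith
  exact ⟨c + d, add_mem_add ⟨hc, by simpa using hc'⟩ ⟨hd, by simpa using hd'⟩,
    (lt_min_iff.1 hzcd).1⟩

theorem isClosed_sup_of_finrank_eq_two (hV : finrank ℝ V = 2) (hC : IsClosed (C : Set V))
    (hD : IsClosed (D : Set V)) : IsClosed ((C ⊔ D : PointedCone ℝ V) : Set V) := by
  by_cases hCD : C ⊓ -D = ⊥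
  · exact isClosed_sup_of_inf_neg_eq_bot hC hD hCD
  obtain ⟨v, ⟨hvC, hvD⟩, hv0⟩ := Submodule.exists_mem_ne_zero_of_ne_bot hCD
  exact (C ⊔ D).isClosed_of_neg_mem_of_finrank_eq_two hV hv0
    (Submodule.mem_sup_left hvC) (Submodule.mem_sup_right hvD)

end PointedCone

theorem ProperCone.exists_coe_eq {E : Type*} [AddCommGroup E] [Module ℝ E] [TopologicalSpace E]
    {K : Set E} (hne : K.Nonempty) (hcl : IsClosed K) (hcv : Convex ℝ K)
    (hcone : ∀ x ∈ K, ∀ τ : ℝ, 0 ≤ τ → τ • x ∈ K) : ∃ C : ProperCone ℝ E, (C : Set E) = K := by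
  refine ⟨⟨PointedCone.ofConeComb K hne fun x hx y hy a ha b hb => ?_, hcl⟩, rfl⟩
  obtain ⟨z, hz, hxy⟩ : a • x + b • y ∈ (a + b) • K := by
    rw [hcv.add_smul ha hb]
    exact add_mem_add (smul_mem_smul_set hx) (smul_mem_smul_set hy)
  exact hxy ▸ hcone z hz _ (add_nonneg ha hb)

theorem ProperCone.coe_innerDual_inter_of_isClosed {E : Type*} [NormedAddCommGroup E]
    [InnerProductSpace ℝ E] [CompleteSpace E] (C D : ProperCone ℝ E)
    (h : IsClosed (((innerDual (C : Set E) : PointedCone ℝ E) ⊔ innerDual (D : Set E) :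
      PointedCone ℝ E) : Set E)) :
    (innerDual ((C : Set E) ∩ D) : Set E) =
      (innerDual (C : Set E) : Set E) + (innerDual (D : Set E) : Set E) := by
  let F : ProperCone ℝ E := ⟨(innerDual (C : Set E) : PointedCone ℝ E) ⊔ innerDual (D : Set E), h⟩
  have hF : (F : Set E) = (innerDual (C : Set E) : Set E) + (innerDual (D : Set E) : Set E) :=
    Submodule.coe_sup _ _
  have hFdual : innerDual (F : Set E) = C ⊓ D :=
    calc innerDual (F : Set E)
        = innerDual ((innerDual (C : Set E) : Set E) ∪ innerDual (D : Set E)) :=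
          toPointedCone_injective (PointedCone.dual_sup _ _)
      _ = C ⊓ D := by rw [innerDual_union, innerDual_innerDual, innerDual_innerDual]
  rw [← hF, ← innerDual_innerDual F, hFdual]
  rfl

theorem dualCone_eq_coe_innerDual (S : Set (EuclideanSpace ℝ (Fin 2))) :
    dualCone S = innerDual S := rfl

/-- For closed convex cones `K₁, K₂ ⊆ ℝ²`, `(K₁ ∩ K₂)* = K₁* + K₂*`. -/
theorem dualCone_inter_eq_add_of_closed_cones (K₁ K₂ : Set (EuclideanSpace ℝ (Fin 2)))
    (h₁cl : IsClosed K₁) (h₁cv : Convex ℝ K₁)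
    (h₁cone : ∀ x ∈ K₁, ∀ τ : ℝ, 0 ≤ τ → τ • x ∈ K₁)
    (h₂cl : IsClosed K₂) (h₂cv : Convex ℝ K₂)
    (h₂cone : ∀ x ∈ K₂, ∀ τ : ℝ, 0 ≤ τ → τ • x ∈ K₂) :
    dualCone (K₁ ∩ K₂) = dualCone K₁ + dualCone K₂ := by
  simp only [dualCone_eq_coe_innerDual]
  rcases K₁.eq_empty_or_nonempty with rfl | hK₁
  · simp [univ_add (innerDual K₂).nonempty]
  rcases K₂.eq_empty_or_nonempty with rfl | hK₂
  · simp [add_univ (innerDual K₁).nonempty]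
  obtain ⟨C₁, rfl⟩ := ProperCone.exists_coe_eq hK₁ h₁cl h₁cv h₁cone
  obtain ⟨C₂, rfl⟩ := ProperCone.exists_coe_eq hK₂ h₂cl h₂cv h₂cone
  exact C₁.coe_innerDual_inter_of_isClosed C₂ <| PointedCone.isClosed_sup_of_finrank_eq_two
    finrank_euclideanSpace_fin (innerDual _).isClosed (innerDual _).isClosed
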